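/- Let k be a commutative ring and let H_1, H_2 be conilpotent coaugmented coalgebras over k. Then the tensor product coaugmented coalgebra H_1 ⊗ H_2 is conilpotent. -/

import Mathlib

open TensorProduct

noncomputable section

universe u

variable (R : Type u) [CommRing R]

/-- `Tpow R H n` is the `n`-th tensor power `H^{⊗n}` of the `R`-module `H`,
defined recursively by `H^{⊗0} = R` and `H^{⊗(n+1)} = H ⊗ H^{⊗n}`. -/
def Tpow (H : Type u) [AddCommGroup H] [Module R H] : ℕ → ModuleCat.{u} R
  | 0 => ModuleCat.of R R
  | n + 1 => ModuleCat.of R (H ⊗[R] (Tpow H n))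

variable {R}
variable {H : Type u} [AddCommGroup H] [Module R H]

/-- The iterated comultiplication `Δ^{(n)} : H → H^{⊗n}`:
`Δ^{(0)} = ε`, `Δ^{(1)} = id` (as the canonical map `H ≅ H ⊗ R`), and
`Δ^{(n+1)} = (Δ ⊗ id^{⊗(n−1)}) ∘ Δ^{(n)}`. -/
def iterComul (Δc : H →ₗ[R] H ⊗[R] H) (εc : H →ₗ[R] R) : (n : ℕ) → (H →ₗ[R] Tpow R H n)
  | 0 => εc
  | 1 => (TensorProduct.rid R H).symm.toLinearMap
  | n + 2 =>
      (TensorProduct.assoc R H H (Tpow R H n)).toLinearMap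
        ∘ₗ (LinearMap.rTensor (Tpow R H n) Δc)
        ∘ₗ (iterComul Δc εc (n + 1))

/-- The `n`-fold tensor power `e^{⊗n} : H^{⊗n} → H^{⊗n}` of a linear endomorphism `e`. -/
def mapPow (e : H →ₗ[R] H) : (n : ℕ) → (Tpow R H n →ₗ[R] Tpow R H n)
  | 0 => LinearMap.id
  | n + 1 => TensorProduct.map e (mapPow e n)

/-- `e_H := id − η ∘ ε`, where `η : R → H` is the coaugmentation `r ↦ r • u` sending `1` to `u`. -/
def eAug (εc : H →ₗ[R] R) (u : H) : H →ₗ[R] H :=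
  LinearMap.id - (LinearMap.toSpanSingleton R H u) ∘ₗ εc

/-- `δ^n := e_H^{⊗n} ∘ Δ^{(n)} : H → H^{⊗n}`. -/
def deltaPow (Δc : H →ₗ[R] H ⊗[R] H) (εc : H →ₗ[R] R) (u : H) (n : ℕ) :
    H →ₗ[R] Tpow R H n :=
  (mapPow (eAug εc u) n) ∘ₗ (iterComul Δc εc n)

/-- The `n`-th term `P_n(H) := ker (δ^{n+1})` of the coradical filtration. -/
def corad (Δc : H →ₗ[R] H ⊗[R] H) (εc : H →ₗ[R] R) (u : H) (n : ℕ) : Submodule R H :=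
  LinearMap.ker (deltaPow Δc εc u (n + 1))

section TensorCoalgebra

variable {R : Type u} [CommRing R]
variable {H₁ H₂ : Type u} [AddCommGroup H₁] [Module R H₁] [AddCommGroup H₂] [Module R H₂]

/-- The comultiplication `(id ⊗ swap ⊗ id) ∘ (Δ₁ ⊗ Δ₂)` of the tensor product coalgebra. -/
def tensorComul (Δ₁ : H₁ →ₗ[R] H₁ ⊗[R] H₁) (Δ₂ : H₂ →ₗ[R] H₂ ⊗[R] H₂) :
    (H₁ ⊗[R] H₂) →ₗ[R] (H₁ ⊗[R] H₂) ⊗[R] (H₁ ⊗[R] H₂) :=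
  (TensorProduct.tensorTensorTensorComm R H₁ H₁ H₂ H₂).toLinearMap
    ∘ₗ TensorProduct.map Δ₁ Δ₂

/-- The counit `ε₁ ⊗ ε₂` of the tensor product coalgebra. -/
def tensorCounit (ε₁ : H₁ →ₗ[R] R) (ε₂ : H₂ →ₗ[R] R) : (H₁ ⊗[R] H₂) →ₗ[R] R :=
  (TensorProduct.lid R R).toLinearMap ∘ₗ TensorProduct.map ε₁ ε₂

end TensorCoalgebra


/-!
Write `e = id - ηε` and `π = ηε` on each factor. Expanding `id = (e₁ + π₁) ⊗ (e₂ + π₂)` and noting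
that `π₁ ⊗ π₂` is `ηε` of `H₁ ⊗ H₂` gives `e = e₁ ⊗ e₂ + e₁ ⊗ π₂ + π₁ ⊗ e₂`. Feeding this into
`δⁿ⁺¹ = (e ⊗ δⁿ) ∘ Δ` and using `(π ⊗ g) ∘ Δ = 1 ⊗ g`, induction on `n` shows that `δⁿ` of
`H₁ ⊗ H₂` is a linear combination of maps `G ∘ (δ₁ᵃ ⊗ δ₂ᵇ)` with `a + b ≥ n`: every tensor slot
carries an `e` on at least one side. For `x ∈ P_p(H₁)`, `y ∈ P_q(H₂)` and `n = p + q + 1` each term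
has `a > p` or `b > q`, and it kills `x ⊗ y` because, `1` being group-like, `δˢ⁺¹` factors through
`δˢ` for `s ≥ 1`. Thus `P_p(H₁) ⊗ P_q(H₂)` lands in `P_{p+q}(H₁ ⊗ H₂)`.
-/

open Coalgebra

def coaugProj (εc : H →ₗ[R] R) (u : H) : H →ₗ[R] H :=
  LinearMap.toSpanSingleton R H u ∘ₗ εc

section Coaugmented

variable [Coalgebra R H] {u : H}

theorem assoc_comp_rTensor_comul_comp_lTensor {M : Type*} [AddCommGroup M] [Module R M]
    (F : H →ₗ[R] M) :
    (TensorProduct.assoc R H H M).toLinearMap ∘ₗ (comul (R := R)).rTensor M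
        ∘ₗ F.lTensor H ∘ₗ comul
      = (F.lTensor H ∘ₗ comul).lTensor H ∘ₗ comul := by
  simp only [coassoc_simps]

theorem iterComul_succ (n : ℕ) :
    iterComul (comul (R := R)) counit (n + 1)
      = (iterComul (comul (R := R) (A := H)) counit n).lTensor H ∘ₗ comul := by
  induction n with
  | zero =>
    ext x
    exact (lTensor_counit_comul x).symm
  | succ n ih =>
    change (TensorProduct.assoc R H H _).toLinearMap ∘ₗ (comul (R := R) (A := H)).rTensor _
        ∘ₗ iterComul comul counit (n + 1) = _
    rw [ih]
    exact assoc_comp_rTensor_comul_comp_lTensor _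

theorem deltaPow_succ (n : ℕ) :
    deltaPow (comul (R := R)) counit u (n + 1)
      = map (eAug counit u) (deltaPow comul counit u n) ∘ₗ comul := by
  rw [deltaPow, iterComul_succ]
  exact congrArg (· ∘ₗ comul) (LinearMap.map_comp_lTensor _ _ _ _)

theorem map_coaugProj_comp_comul {N : Type*} [AddCommGroup N] [Module R N] (g : H →ₗ[R] N) :
    map (coaugProj counit u) g ∘ₗ comul = TensorProduct.mk R H N u ∘ₗ g := by
  rw [coaugProj, ← LinearMap.map_comp_rTensor, LinearMap.comp_assoc, rTensor_counit_comp_comul]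
  ext x
  simp

theorem map_eAug_comp_comul_comp_eAug
    (hεu : counit (R := R) u = 1) (hΔu : comul (R := R) u = u ⊗ₜ u) :
    map (eAug counit u) (eAug counit u) ∘ₗ comul ∘ₗ eAug counit u
      = map (eAug (R := R) counit u) (eAug counit u) ∘ₗ comul := by
  ext x
  simp [eAug, hΔu, hεu]

theorem exists_deltaPow_add_two_eq_comp
    (hεu : counit (R := R) u = 1) (hΔu : comul (R := R) u = u ⊗ₜ u) (n : ℕ) :
    ∃ K : Tpow R H (n + 1) →ₗ[R] Tpow R H (n + 2),
      deltaPow (comul (R := R)) counit u (n + 2) = K ∘ₗ deltaPow comul counit u (n + 1) := by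
  set e := eAug (R := R) counit u
  refine ⟨(TensorProduct.assoc R H H (Tpow R H n)).toLinearMap
    ∘ₗ (map e e ∘ₗ comul).rTensor (Tpow R H n), ?_⟩
  change map e (map e (mapPow e n)) ∘ₗ (TensorProduct.assoc R H H _).toLinearMap
      ∘ₗ (comul (R := R)).rTensor _ ∘ₗ iterComul comul counit (n + 1)
    = ((TensorProduct.assoc R H H (Tpow R H n)).toLinearMap
      ∘ₗ (map e e ∘ₗ comul).rTensor (Tpow R H n))
      ∘ₗ map e (mapPow e n) ∘ₗ iterComul comul counit (n + 1)
  have absorb : map (map e e) (mapPow e n) ∘ₗ (comul (R := R)).rTensor (Tpow R H n)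
      = (map e e ∘ₗ comul).rTensor (Tpow R H n) ∘ₗ map e (mapPow e n) := by
    rw [LinearMap.map_comp_rTensor, LinearMap.rTensor_comp_map, LinearMap.comp_assoc,
      map_eAug_comp_comul_comp_eAug hεu hΔu]
  rw [← LinearMap.comp_assoc, TensorProduct.map_map_comp_assoc_eq]
  exact congrArg (fun F ↦ (TensorProduct.assoc R H H _).toLinearMap ∘ₗ F
    ∘ₗ iterComul comul counit (n + 1)) absorb

theorem deltaPow_apply_eq_zero_of_mem_corad
    (hεu : counit (R := R) u = 1) (hΔu : comul (R := R) u = u ⊗ₜ u)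
    {p s : ℕ} {x : H} (hx : x ∈ corad (comul (R := R)) counit u p) (hs : p < s) :
    deltaPow (comul (R := R)) counit u s x = 0 := by
  induction s, hs using Nat.le_induction with
  | base => exact hx
  | succ s hs ih =>
    obtain ⟨n, rfl⟩ := Nat.exists_eq_add_of_lt hs
    obtain ⟨K, hK⟩ := exists_deltaPow_add_two_eq_comp hεu hΔu (p + n)
    rw [hK, LinearMap.comp_apply, ih, map_zero]

theorem corad_mono (hεu : counit (R := R) u = 1) (hΔu : comul (R := R) u = u ⊗ₜ u) :
    Monotone (corad (comul (R := R)) counit u) := fun _ _ hpq _ hx ↦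
  deltaPow_apply_eq_zero_of_mem_corad hεu hΔu hx (Nat.lt_succ_of_le hpq)

end Coaugmented

section TensorCoaugmented

variable {H₁ H₂ : Type u} [AddCommGroup H₁] [Module R H₁] [AddCommGroup H₂] [Module R H₂]

theorem eAug_tensorCounit (ε₁ : H₁ →ₗ[R] R) (ε₂ : H₂ →ₗ[R] R) (u₁ : H₁) (u₂ : H₂) :
    eAug (tensorCounit ε₁ ε₂) (u₁ ⊗ₜ[R] u₂)
      = map (eAug ε₁ u₁) (eAug ε₂ u₂) + map (eAug ε₁ u₁) (coaugProj ε₂ u₂)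
        + map (coaugProj ε₁ u₁) (eAug ε₂ u₂) := by
  ext x y
  simp [eAug, coaugProj, tensorCounit, tmul_sub, sub_tmul, smul_tmul', smul_smul, mul_comm]

variable [Coalgebra R H₁] [Coalgebra R H₂]

theorem tensorComul_comul_comul :
    tensorComul (comul (R := R) (A := H₁)) (comul (A := H₂)) = comul (A := H₁ ⊗[R] H₂) :=
  rfl

theorem tensorCounit_counit_counit :
    tensorCounit (counit (R := R) (A := H₁)) (counit (A := H₂)) = counit (A := H₁ ⊗[R] H₂) := by
  ext x y
  simp [tensorCounit, mul_comm]

theorem map_map_comp_comul_tensorProduct {M₁ M₂ N₁ N₂ X : Type*}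
    [AddCommGroup M₁] [Module R M₁] [AddCommGroup M₂] [Module R M₂]
    [AddCommGroup N₁] [Module R N₁] [AddCommGroup N₂] [Module R N₂] [AddCommGroup X] [Module R X]
    (f₁ : H₁ →ₗ[R] M₁) (f₂ : H₂ →ₗ[R] M₂) (g₁ : H₁ →ₗ[R] N₁) (g₂ : H₂ →ₗ[R] N₂)
    (G : N₁ ⊗[R] N₂ →ₗ[R] X) :
    map (map f₁ f₂) (G ∘ₗ map g₁ g₂) ∘ₗ comul (R := R) (A := H₁ ⊗[R] H₂)
      = G.lTensor (M₁ ⊗[R] M₂) ∘ₗ (tensorTensorTensorComm R M₁ N₁ M₂ N₂).toLinearMap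
        ∘ₗ map (map f₁ g₁ ∘ₗ comul) (map f₂ g₂ ∘ₗ comul) := by
  rw [← tensorComul_comul_comul, tensorComul, ← LinearMap.lTensor_comp_map, LinearMap.comp_assoc,
    ← LinearMap.comp_assoc _ (tensorTensorTensorComm R _ _ _ _).toLinearMap,
    ← tensorTensorTensorComm_comp_map, map_comp]
  rfl

variable (u₁ : H₁) (u₂ : H₂)

def mapDeltaPowSpan (n : ℕ) (X : Type*) [AddCommGroup X] [Module R X] :
    Submodule R (H₁ ⊗[R] H₂ →ₗ[R] X) :=
  Submodule.span R {F | ∃ a b, n ≤ a + b ∧ ∃ G : Tpow R H₁ a ⊗[R] Tpow R H₂ b →ₗ[R] X,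
    F = G ∘ₗ map (deltaPow comul counit u₁ a) (deltaPow comul counit u₂ b)}

variable {u₁ u₂} {X : Type*} [AddCommGroup X] [Module R X]

theorem comp_map_deltaPow_mem_mapDeltaPowSpan {a b n : ℕ} (h : n ≤ a + b)
    (G : Tpow R H₁ a ⊗[R] Tpow R H₂ b →ₗ[R] X) :
    G ∘ₗ map (deltaPow comul counit u₁ a) (deltaPow comul counit u₂ b)
      ∈ mapDeltaPowSpan u₁ u₂ n X :=
  Submodule.subset_span ⟨a, b, h, G, rfl⟩

theorem map_eAug_comp_comul_mem_mapDeltaPowSpan {n : ℕ} {F : H₁ ⊗[R] H₂ →ₗ[R] X}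
    (hF : F ∈ mapDeltaPowSpan u₁ u₂ n X) :
    map (eAug counit (u₁ ⊗ₜ u₂)) F ∘ₗ comul
      ∈ mapDeltaPowSpan u₁ u₂ (n + 1) (H₁ ⊗[R] H₂ ⊗[R] X) := by
  induction hF using Submodule.span_induction with
  | mem F hF =>
    obtain ⟨a, b, hab, G, rfl⟩ := hF
    rw [← tensorCounit_counit_counit, eAug_tensorCounit, map_add_left, map_add_left,
      LinearMap.add_comp, LinearMap.add_comp, map_map_comp_comul_tensorProduct,
      map_map_comp_comul_tensorProduct, map_map_comp_comul_tensorProduct]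
    -- `Tpow R H (a + 1)` is `H ⊗ Tpow R H a` only after unfolding, so `G` is given explicitly.
    refine add_mem (add_mem ?_ ?_) ?_
    · rw [← deltaPow_succ, ← deltaPow_succ]
      exact comp_map_deltaPow_mem_mapDeltaPowSpan (n := n + 1) (a := a + 1) (b := b + 1)
        (by omega) (G.lTensor _ ∘ₗ (tensorTensorTensorComm R _ _ _ _).toLinearMap)
    · rw [map_coaugProj_comp_comul, ← LinearMap.lTensor_comp_map, ← deltaPow_succ]
      exact comp_map_deltaPow_mem_mapDeltaPowSpan (n := n + 1) (a := a + 1) (b := b)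
        (by omega) (G.lTensor _ ∘ₗ (tensorTensorTensorComm R _ _ _ _).toLinearMap
          ∘ₗ (TensorProduct.mk R H₂ (Tpow R H₂ b) u₂).lTensor _)
    · rw [map_coaugProj_comp_comul, ← LinearMap.rTensor_comp_map, ← deltaPow_succ]
      exact comp_map_deltaPow_mem_mapDeltaPowSpan (n := n + 1) (a := a) (b := b + 1)
        (by omega) (G.lTensor _ ∘ₗ (tensorTensorTensorComm R _ _ _ _).toLinearMap
          ∘ₗ (TensorProduct.mk R H₁ (Tpow R H₁ a) u₁).rTensor _)
  | zero => simp
  | add F F' _ _ hF hF' =>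
    rw [map_add_right, LinearMap.add_comp]
    exact add_mem hF hF'
  | smul r F _ hF =>
    rw [map_smul_right, LinearMap.smul_comp]
    exact Submodule.smul_mem _ r hF

theorem deltaPow_mem_mapDeltaPowSpan (n : ℕ) :
    deltaPow (comul (R := R) (A := H₁ ⊗[R] H₂)) counit (u₁ ⊗ₜ[R] u₂) n
      ∈ mapDeltaPowSpan u₁ u₂ n (Tpow R (H₁ ⊗[R] H₂) n) := by
  induction n with
  | zero =>
    change counit ∈ _
    rw [← tensorCounit_counit_counit]
    exact comp_map_deltaPow_mem_mapDeltaPowSpan (u₁ := u₁) (u₂ := u₂) (a := 0) (b := 0) le_rfl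
      (TensorProduct.lid R R).toLinearMap
  | succ n ih =>
    rw [deltaPow_succ]
    exact map_eAug_comp_comul_mem_mapDeltaPowSpan ih

theorem apply_tmul_eq_zero_of_mem_mapDeltaPowSpan
    (hεu₁ : counit (R := R) u₁ = 1) (hΔu₁ : comul (R := R) u₁ = u₁ ⊗ₜ u₁)
    (hεu₂ : counit (R := R) u₂ = 1) (hΔu₂ : comul (R := R) u₂ = u₂ ⊗ₜ u₂)
    {p q : ℕ} {F : H₁ ⊗[R] H₂ →ₗ[R] X} (hF : F ∈ mapDeltaPowSpan u₁ u₂ (p + q + 1) X) {x : H₁}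
    (hx : x ∈ corad (comul (R := R)) counit u₁ p) {y : H₂}
    (hy : y ∈ corad (comul (R := R)) counit u₂ q) :
    F (x ⊗ₜ y) = 0 := by
  induction hF using Submodule.span_induction with
  | mem F hF =>
    obtain ⟨a, b, hab, G, rfl⟩ := hF
    rcases (by omega : p < a ∨ q < b) with ha | hb
    · simp [deltaPow_apply_eq_zero_of_mem_corad hεu₁ hΔu₁ hx ha]
    · simp [deltaPow_apply_eq_zero_of_mem_corad hεu₂ hΔu₂ hy hb]
  | zero => rfl
  | add F F' _ _ hF hF' => simp [hF, hF']
  | smul r F _ hF => simp [hF]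

theorem tmul_mem_corad
    (hεu₁ : counit (R := R) u₁ = 1) (hΔu₁ : comul (R := R) u₁ = u₁ ⊗ₜ u₁)
    (hεu₂ : counit (R := R) u₂ = 1) (hΔu₂ : comul (R := R) u₂ = u₂ ⊗ₜ u₂)
    {p q : ℕ} {x : H₁} (hx : x ∈ corad (comul (R := R)) counit u₁ p) {y : H₂}
    (hy : y ∈ corad (comul (R := R)) counit u₂ q) :
    x ⊗ₜ y ∈ corad (comul (R := R)) counit (u₁ ⊗ₜ[R] u₂) (p + q) :=
  apply_tmul_eq_zero_of_mem_mapDeltaPowSpan hεu₁ hΔu₁ hεu₂ hΔu₂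
    (deltaPow_mem_mapDeltaPowSpan (p + q + 1)) hx hy

end TensorCoaugmented

/-- If `H₁`, `H₂` are conilpotent coaugmented coalgebras, then so is `H₁ ⊗ H₂`. -/
theorem stmt3 {R : Type u} [CommRing R]
    {H₁ H₂ : Type u} [AddCommGroup H₁] [Module R H₁] [AddCommGroup H₂] [Module R H₂]
    [Coalgebra R H₁] [Coalgebra R H₂] (u₁ : H₁) (u₂ : H₂)
    (hεu₁ : Coalgebra.counit (R := R) (A := H₁) u₁ = 1)
    (hΔu₁ : Coalgebra.comul (R := R) (A := H₁) u₁ = u₁ ⊗ₜ[R] u₁)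
    (hεu₂ : Coalgebra.counit (R := R) (A := H₂) u₂ = 1)
    (hΔu₂ : Coalgebra.comul (R := R) (A := H₂) u₂ = u₂ ⊗ₜ[R] u₂)
    (h₁ : ∀ x : H₁, ∃ n : ℕ, x ∈ corad (Coalgebra.comul (R := R) (A := H₁))
      (Coalgebra.counit (R := R) (A := H₁)) u₁ n)
    (h₂ : ∀ y : H₂, ∃ n : ℕ, y ∈ corad (Coalgebra.comul (R := R) (A := H₂))
      (Coalgebra.counit (R := R) (A := H₂)) u₂ n) :
    ∀ z : H₁ ⊗[R] H₂, ∃ n : ℕ, z ∈ corad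
      (tensorComul (Coalgebra.comul (R := R) (A := H₁)) (Coalgebra.comul (R := R) (A := H₂)))
      (tensorCounit (Coalgebra.counit (R := R) (A := H₁)) (Coalgebra.counit (R := R) (A := H₂)))
      (u₁ ⊗ₜ[R] u₂) n := by
  rw [tensorComul_comul_comul, tensorCounit_counit_counit]
  have hεu : counit (R := R) (u₁ ⊗ₜ[R] u₂) = 1 := by simp [hεu₁, hεu₂]
  have hΔu : comul (R := R) (u₁ ⊗ₜ[R] u₂) = (u₁ ⊗ₜ u₂) ⊗ₜ (u₁ ⊗ₜ u₂) := by
    simp [hΔu₁, hΔu₂]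
  intro z
  induction z using TensorProduct.induction_on with
  | zero => exact ⟨0, zero_mem _⟩
  | tmul x y =>
    obtain ⟨p, hp⟩ := h₁ x
    obtain ⟨q, hq⟩ := h₂ y
    exact ⟨p + q, tmul_mem_corad hεu₁ hΔu₁ hεu₂ hΔu₂ hp hq⟩
  | add z w hz hw =>
    obtain ⟨m, hm⟩ := hz
    obtain ⟨n, hn⟩ := hw
    have hmono := corad_mono hεu hΔu
    exact ⟨max m n, add_mem (hmono (le_max_left m n) hm) (hmono (le_max_right m n) hn)⟩
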